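/- arXiv:2407.05445 — 2 statements merged into one kernel-verified Lean document; each statement's English description precedes it below -/
import Mathlib

section
/- Let G be an h×w grid structure with the canonical half-edge labeling (L/R horizontal, U/D vertical), and suppose the nodes are additionally labeled with bits in {0,1} such that: (a) if u is labeled 1 then the node reached from u via U then R (if it exists) is labeled 1, and the node reached via D then L (if it exists) is labeled 1; (b) if u is labeled 1 and u has no D-edge then u has no L-edge; (c) if u is labeled 1 and u has no U-edge then u has no R-edge. If at least one node is labeled 1, then h ≥ w. -/
/-- In an `h×w` grid with node bit-labels satisfying:
(a) a `1`-labeled node propagates its label diagonally (via U-then-R and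
D-then-L moves, when they exist); (b) a `1`-labeled node with no D-edge has no
L-edge; (c) a `1`-labeled node with no U-edge has no R-edge — if at least one
node is labeled `1` then `h ≥ w`. -/
theorem stmt9 (h w : ℕ) (b : ℕ × ℕ → Bool)
    (ha : ∀ x y : ℕ, x < w → y < h → b (x, y) = true →
      (x + 1 < w → y + 1 < h → b (x + 1, y + 1) = true) ∧
      (0 < x → 0 < y → b (x - 1, y - 1) = true))
    (hb : ∀ x y : ℕ, x < w → y < h → b (x, y) = true → y = 0 → x = 0)
    (hc : ∀ x y : ℕ, x < w → y < h → b (x, y) = true → y + 1 = h → x + 1 = w)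
    (hex : ∃ x y : ℕ, x < w ∧ y < h ∧ b (x, y) = true) :
    w ≤ h := by
  obtain ⟨x, y, hx, hy, hbxy⟩ := hex
  have down : ∀ k, k ≤ x → k ≤ y → b (x - k, y - k) = true := by
    intro k
    induction k with
    | zero => intro _ _; simpa using hbxy
    | succ k ih =>
      intro hkx hky
      have h1 := (ha (x - k) (y - k) (by omega) (by omega)
        (ih (by omega) (by omega))).2 (by omega) (by omega)
      have e1 : x - k - 1 = x - (k + 1) := by omega
      have e2 : y - k - 1 = y - (k + 1) := by omega
      rwa [e1, e2] at h1
  have up : ∀ k, x + k < w → y + k < h → b (x + k, y + k) = true := by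
    intro k
    induction k with
    | zero => intro _ _; simpa using hbxy
    | succ k ih =>
      intro hkx hky
      have h1 := (ha (x + k) (y + k) (by omega) (by omega)
        (ih (by omega) (by omega))).1 (by omega) (by omega)
      have e1 : x + k + 1 = x + (k + 1) := by omega
      rwa [e1] at h1
  have hxy : x ≤ y := by
    by_contra hlt
    push_neg at hlt
    have h1 := down y (by omega) le_rfl
    have h2 := hb (x - y) (y - y) (by omega) (by omega) h1 (by omega)
    omega
  have hwy : w + y ≤ h + x := by
    by_contra hlt
    push_neg at hlt
    have hk : x + (h - 1 - y) < w := by omega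
    have h1 := up (h - 1 - y) (by omega) (by omega)
    have h2 := hc (x + (h - 1 - y)) (y + (h - 1 - y)) (by omega) (by omega) h1 (by omega)
    omega
  omega
end

section
/- Let Π be a component-wise checkable labeling problem and let A be a randomized distributed algorithm with no knowledge of the total number of nodes, such that for every constant c > 0 there exists n₀ with: A succeeds with probability at least 1 − n^{−c} on every graph with n ≥ n₀ nodes. Suppose further that A's output distribution on a connected component depends only on that component (not on the rest of the graph). Then A is error-free: it succeeds with probability 1 on every graph. -/
/-- Let `Π` be a component-wise checkable problem and `A` a Monte
Carlo algorithm with no knowledge of `n`. We abstract: `fail G` is the failure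
probability of `A` on graph `G` (a nonnegative real), every graph has at least
one node, and for every graph `G` and every `N` there is a graph `G'` (the
disjoint union of `G` with an `N`-node graph `H`) with `size G' = size G + N`
whose failure probability is at least that of `G` (since, by component-wise
checkability and the no-knowledge-of-`n` assumption, `A`'s output distribution
on the component `G` inside `G'` equals its distribution on `G` alone). If `A`
is Monte Carlo — for every `c > 0` there is `n₀` such that `A` fails with
probability at most `n^(-c)` on every graph with `n ≥ n₀` nodes — then `A` is
error-free: it fails with probability `0` on every graph. -/
theorem stmt17 {Graph : Type*} (size : Graph → ℕ) (fail : Graph → ℝ)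
    (hnonneg : ∀ G, 0 ≤ fail G) (hsize : ∀ G, 1 ≤ size G)
    (hunion : ∀ (G : Graph) (N : ℕ), ∃ G' : Graph,
      size G' = size G + N ∧ fail G ≤ fail G')
    (hmc : ∀ c : ℝ, 0 < c → ∃ n₀ : ℕ, ∀ G : Graph, n₀ ≤ size G →
      fail G ≤ (size G : ℝ) ^ (-c)) :
    ∀ G : Graph, fail G = 0 := by
  intro G
  refine le_antisymm ?_ (hnonneg G)
  refine forall_gt_iff_le.mp fun ε hε => ?_
  obtain ⟨n₀, hn₀⟩ := hmc 1 one_pos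
  obtain ⟨N, hN⟩ := exists_nat_gt (max (n₀ : ℝ) ε⁻¹)
  obtain ⟨G', hs, hle⟩ := hunion G N
  have hsz : (n₀ : ℕ) ≤ size G' := by
    rw [hs]
    have : (n₀ : ℝ) < N := lt_of_le_of_lt (le_max_left _ _) hN
    exact_mod_cast le_of_lt (lt_of_lt_of_le (Nat.cast_lt.mp this) (Nat.le_add_left _ _))
  have h1 := hn₀ G' hsz
  rw [Real.rpow_neg_one] at h1
  have hεinv : ε⁻¹ < (size G' : ℝ) := by
    rw [hs]
    calc ε⁻¹ ≤ max (n₀:ℝ) ε⁻¹ := le_max_right _ _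
      _ < N := hN
      _ ≤ ((size G + N : ℕ) : ℝ) := by exact_mod_cast Nat.le_add_left _ _
  have hpos : (0:ℝ) < ε := hε
  have : (size G' : ℝ)⁻¹ < ε := by
    have hposG : (0:ℝ) < (size G' : ℝ) := by exact_mod_cast hsize G'
    rw [inv_lt_comm₀ hposG hpos]
    exact hεinv
  exact lt_of_le_of_lt (hle.trans h1) this
end
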